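/- Let F be a nonnegative random variable such that for some λ > 0 and all a ≥ 0, P(F ≤ e^{-√λ·a}) ≤ 2e^{-a²/4}. Then for every p ≥ 0, E[F^{-p}] ≤ 4√(π p² λ) e^{p²λ} + 1. -/

import Mathlib

open MeasureTheory Real

/-- Let `F` be a nonnegative random variable such that for some `λ > 0` and all
`a ≥ 0`, `P(F ≤ e^{-√λ a}) ≤ 2 e^{-a²/4}`. Then for every `p ≥ 0`,
`E[F^{-p}] ≤ 4 √(π p² λ) e^{p² λ} + 1`. -/
theorem negative_moment_bound {Ω : Type*} [MeasurableSpace Ω]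
    (P : Measure Ω) [IsProbabilityMeasure P] (F : Ω → ℝ)
    (hF : Measurable F) (hF0 : ∀ ω, 0 ≤ F ω) {l : ℝ} (hl : 0 < l)
    (htail : ∀ a : ℝ, 0 ≤ a →
      P {ω | F ω ≤ Real.exp (-(Real.sqrt l * a))} ≤
        ENNReal.ofReal (2 * Real.exp (-a ^ 2 / 4))) :
    ∀ p : ℝ, 0 ≤ p →
      (∫⁻ ω, ENNReal.ofReal ((F ω) ^ (-p)) ∂P) ≤
        ENNReal.ofReal (4 * Real.sqrt (Real.pi * p ^ 2 * l) * Real.exp (p ^ 2 * l) + 1) := by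
  intro p hp
  rcases hp.eq_or_lt with hp0 | hp0
  · -- case p = 0
    subst hp0
    simp only [neg_zero, Real.rpow_zero, ENNReal.ofReal_one, lintegral_one, measure_univ, mul_one]
    rw [show Real.pi * (0:ℝ)^2 * l = 0 by ring, Real.sqrt_zero]
    norm_num
  -- case 0 < p
  set c : ℝ := p ^ 2 * l with hc_def
  have hc : 0 < c := by positivity
  have hsl : 0 < Real.sqrt l := Real.sqrt_pos.2 hl
  set g : ℝ → ℝ := fun t => 2 * Real.exp (-(Real.log t / (p * Real.sqrt l)) ^ 2 / 4) with hg_def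
  set φ : ℝ → ℝ := fun s => (2 * Real.exp c) * Real.exp (-(1/(4*c)) * (s - 2*c) ^ 2) with hφ_def
  -- layer cake
  have hmeas : AEMeasurable (fun ω => F ω ^ (-p)) P := (hF.pow_const _).aemeasurable
  rw [lintegral_eq_lintegral_meas_lt P
    (Filter.Eventually.of_forall fun ω => Real.rpow_nonneg (hF0 ω) _) hmeas]
  -- split the domain
  rw [show Set.Ioi (0:ℝ) = Set.Ioc 0 1 ∪ Set.Ioi 1 from
      (Set.Ioc_union_Ioi_eq_Ioi zero_le_one).symm,
    lintegral_union measurableSet_Ioi Set.Ioc_disjoint_Ioi_same]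
  -- bound on (0,1]
  have hA : ∫⁻ t in Set.Ioc (0:ℝ) 1, P {a | t < F a ^ (-p)} ≤ 1 := by
    calc ∫⁻ t in Set.Ioc (0:ℝ) 1, P {a | t < F a ^ (-p)}
        ≤ ∫⁻ _t in Set.Ioc (0:ℝ) 1, 1 := lintegral_mono fun t => prob_le_one
      _ = 1 := by simp [Real.volume_Ioc]
  -- pointwise tail bound on (1,∞)
  have hB1 : ∀ t ∈ Set.Ioi (1:ℝ), P {a | t < F a ^ (-p)} ≤ ENNReal.ofReal (g t) := by
    intro t ht
    have ht1 : (1:ℝ) < t := ht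
    have hlognn : 0 ≤ Real.log t := Real.log_nonneg ht1.le
    have hann : (0:ℝ) ≤ Real.log t / (p * Real.sqrt l) := by positivity
    refine le_trans (measure_mono ?_) (htail _ hann)
    intro ω hω
    simp only [Set.mem_setOf_eq] at hω ⊢
    have hFpos : 0 < F ω := by
      rcases (hF0 ω).eq_or_lt with h | h
      · exfalso
        rw [← h, Real.zero_rpow (by linarith : -p ≠ 0)] at hω
        linarith
      · exact h
    have key : Real.sqrt l * (Real.log t / (p * Real.sqrt l)) = Real.log t / p := by
      field_simp
    rw [key]
    have hlog : Real.log t < -p * Real.log (F ω) := by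
      have h2 := Real.log_lt_log (lt_trans one_pos ht1) hω
      rwa [Real.log_rpow hFpos] at h2
    calc F ω = Real.exp (Real.log (F ω)) := (Real.exp_log hFpos).symm
      _ ≤ Real.exp (-(Real.log t / p)) := by
          apply Real.exp_le_exp.2
          rw [← neg_div, le_div_iff₀ hp0]
          linarith
  have hB : ∫⁻ t in Set.Ioi (1:ℝ), P {a | t < F a ^ (-p)} ≤
      ∫⁻ t in Set.Ioi 1, ENNReal.ofReal (g t) := by
    apply setLIntegral_mono ?_ hB1
    apply ENNReal.measurable_ofReal.comp
    exact (Real.measurable_log.div_const _).pow_const 2 |>.neg.div_const 4 |>.exp.const_mul 2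
  -- change of variables t = exp s
  have himg : Real.exp '' Set.Ioi (0:ℝ) = Set.Ioi 1 := by
    ext x
    simp only [Set.mem_image, Set.mem_Ioi]
    constructor
    · rintro ⟨s, hs, rfl⟩
      calc (1:ℝ) = Real.exp 0 := Real.exp_zero.symm
        _ < Real.exp s := Real.exp_lt_exp.2 hs
    · intro hx
      exact ⟨Real.log x, Real.log_pos hx, Real.exp_log (lt_trans one_pos hx)⟩
  have hderiv : ∀ x ∈ Set.Ioi (0:ℝ),
      HasDerivWithinAt Real.exp (Real.exp x) (Set.Ioi 0) x :=
    fun x _ => (Real.hasDerivAt_exp x).hasDerivWithinAt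
  have hinj : Set.InjOn Real.exp (Set.Ioi 0) := Real.exp_injective.injOn
  have hφeq : ∀ s : ℝ, |Real.exp s| • g (Real.exp s) = φ s := by
    intro s
    rw [smul_eq_mul, abs_of_pos (Real.exp_pos s)]
    simp only [hg_def, hφ_def, Real.log_exp]
    have h1 : (s / (p * Real.sqrt l)) ^ 2 = s ^ 2 / c := by
      rw [div_pow, mul_pow, Real.sq_sqrt hl.le, hc_def]
    rw [h1]
    rw [show Real.exp s * (2 * Real.exp (-(s ^ 2 / c) / 4)) =
        2 * Real.exp (s + -(s ^ 2 / c) / 4) by rw [Real.exp_add]; ring]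
    rw [show 2 * Real.exp c * Real.exp (-(1/(4*c)) * (s - 2*c) ^ 2) =
        2 * Real.exp (c + -(1/(4*c)) * (s - 2*c) ^ 2) by rw [Real.exp_add]; ring]
    congr 1
    field_simp
    ring
  have hφint : Integrable φ := by
    have h1 : Integrable (fun x : ℝ => Real.exp (-(1/(4*c)) * x ^ 2)) :=
      integrable_exp_neg_mul_sq (by positivity)
    exact (h1.comp_sub_right (2*c)).const_mul _
  have hgint : IntegrableOn g (Set.Ioi 1) := by
    rw [← himg, integrableOn_image_iff_integrableOn_abs_deriv_smul
      measurableSet_Ioi hderiv hinj g]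
    exact (hφint.congr (Filter.Eventually.of_forall fun s => (hφeq s).symm)).integrableOn
  have hgnn : ∀ t, 0 ≤ g t := fun t => by positivity
  have hC : ∫⁻ t in Set.Ioi (1:ℝ), ENNReal.ofReal (g t) =
      ENNReal.ofReal (∫ t in Set.Ioi 1, g t) :=
    (ofReal_integral_eq_lintegral_ofReal hgint
      (Filter.Eventually.of_forall hgnn)).symm
  have hval : ∫ t in Set.Ioi (1:ℝ), g t = ∫ s in Set.Ioi 0, φ s := by
    rw [← himg, integral_image_eq_integral_abs_deriv_smul measurableSet_Ioi hderiv hinj g]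
    exact setIntegral_congr_fun measurableSet_Ioi fun s _ => hφeq s
  have hD : ∫ s in Set.Ioi (0:ℝ), φ s ≤ ∫ s, φ s :=
    setIntegral_le_integral hφint (Filter.Eventually.of_forall fun s => by positivity)
  have hgauss : ∫ s, φ s = 4 * Real.sqrt (Real.pi * c) * Real.exp c := by
    have h1 : ∫ s : ℝ, Real.exp (-(1/(4*c)) * (s - 2*c) ^ 2) =
        Real.sqrt (Real.pi / (1/(4*c))) := by
      rw [← integral_gaussian (1/(4*c))]
      exact integral_sub_right_eq_self (fun s => Real.exp (-(1/(4*c)) * s ^ 2)) (2*c)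
    have h2 : Real.sqrt (Real.pi / (1/(4*c))) = 2 * Real.sqrt (Real.pi * c) := by
      rw [show Real.pi / (1/(4*c)) = 4 * (Real.pi * c) by field_simp]
      rw [show (4 : ℝ) * (Real.pi * c) = 2 ^ 2 * (Real.pi * c) by norm_num,
        Real.sqrt_mul (by positivity), Real.sqrt_sq (by norm_num : (0:ℝ) ≤ 2)]
    rw [hφ_def]
    rw [integral_const_mul, h1, h2]
    ring
  -- combine
  have hIoi : ∫⁻ t in Set.Ioi (1:ℝ), P {a | t < F a ^ (-p)} ≤
      ENNReal.ofReal (4 * Real.sqrt (Real.pi * c) * Real.exp c) := by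
    refine hB.trans ?_
    rw [hC]
    apply ENNReal.ofReal_le_ofReal
    rw [hval, ← hgauss]
    exact hD
  calc (∫⁻ t in Set.Ioc (0:ℝ) 1, P {a | t < F a ^ (-p)}) +
        ∫⁻ t in Set.Ioi 1, P {a | t < F a ^ (-p)}
      ≤ 1 + ENNReal.ofReal (4 * Real.sqrt (Real.pi * c) * Real.exp c) :=
        add_le_add hA hIoi
    _ = ENNReal.ofReal (4 * Real.sqrt (Real.pi * p ^ 2 * l) * Real.exp (p ^ 2 * l) + 1) := by
        rw [ENNReal.ofReal_add (by positivity) zero_le_one, ENNReal.ofReal_one,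
          hc_def, mul_assoc Real.pi, add_comm]
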